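/- If V_1, ..., V_{n+1} are exchangeable real-valued random variables, then for any β ∈ (0,1), the probability that V_{n+1} ≤ Quantile(β; empirical distribution of {V_1,...,V_n} ∪ {∞}) is at least β. -/

import Mathlib

open MeasureTheory Set

/-- Level-β quantile of a measure on the extended reals. -/
noncomputable def quantileE (β : ℝ) (F : Measure EReal) : EReal :=
  sInf {z : EReal | ENNReal.ofReal β ≤ F (Set.Iic z)}

/-- Weighted discrete measure on the extended reals, with weights `p` on atoms `v`. -/
noncomputable def wEmp {m : ℕ} (p : Fin m → ℝ) (v : Fin m → EReal) : Measure EReal :=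
  ∑ i, ENNReal.ofReal (p i) • Measure.dirac (v i)

/-- Empirical (uniform) measure on the atoms `v`. -/
noncomputable def empE {m : ℕ} (v : Fin m → EReal) : Measure EReal :=
  wEmp (fun _ => 1 / m) v

/-!
Let `k = ⌈β (n + 1)⌉`. Writing `rank j` for the number of `i` with `V i < V j`, the event in the
theorem is exactly `rank (n + 1) < k`: the quantile is exceeded only once at least `β (n + 1)` of
the atoms lie strictly below `V (n + 1)`. Deterministically, at least `k` of the `n + 1` indices
have rank below `k`, so the `n + 1` events `rank j < k` have probabilities summing to at least
`k`; by exchangeability they are all equal, hence each is at least `k / (n + 1) ≥ β`.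
-/

open Finset

section Rank

variable {ι α : Type*} [Fintype ι] [LinearOrder α]

def rank (y : ι → α) (j : ι) : ℕ := #{i | y i < y j}

theorem rank_comp_perm (y : ι → α) (σ : Equiv.Perm ι) (j : ι) :
    rank (y ∘ σ) j = rank y (σ j) :=
  card_equiv σ (by simp)

/- If some index has rank at least `k`, the one of least value among them has at least `k` strict
predecessors, all of rank below `k`. -/
theorem le_card_filter_rank_lt (y : ι → α) {k : ℕ} (hk : k ≤ Fintype.card ι) :
    k ≤ #{j | rank y j < k} := by
  by_cases hB : ({j | k ≤ rank y j} : Finset ι).Nonempty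
  · obtain ⟨j, hjB, hjmin⟩ := exists_min_image _ y hB
    refine (mem_filter.1 hjB).2.trans (card_le_card fun i hi => ?_)
    simp only [mem_filter, Finset.mem_univ, true_and] at hi hjmin ⊢
    by_contra! h
    exact (hjmin i h).not_gt hi
  · rw [Finset.not_nonempty_iff_eq_empty, filter_eq_empty_iff] at hB
    rwa [filter_true_of_mem fun j _ => not_le.1 (hB (Finset.mem_univ j)), card_univ]

theorem measurable_rank (j : ι) : Measurable fun y : ι → ℝ => rank y j := by
  simp only [rank, card_filter]
  exact Finset.measurable_sum _ fun i _ =>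
    Measurable.ite (measurableSet_lt (measurable_pi_apply i) (measurable_pi_apply j))
      measurable_const measurable_const

end Rank

theorem Fin.card_filter_univ_eq_castSucc_of_not_last {n : ℕ} (p : Fin (n + 1) → Prop)
    [DecidablePred p] (hp : ¬ p (Fin.last n)) : #{i | p i} = #{i : Fin n | p i.castSucc} := by
  simp only [card_filter, Fin.sum_univ_castSucc, hp, if_false, add_zero]

section Probability

variable {Ω : Type*} [MeasurableSpace Ω] {P : Measure Ω}

theorem natCast_mul_le_sum_measure {ι : Type*} [Fintype ι] {A : ι → Set Ω}
    [∀ j, DecidablePred (· ∈ A j)] (hA : ∀ j, MeasurableSet (A j)) {k : ℕ}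
    (hk : ∀ ω, k ≤ #{j | ω ∈ A j}) :
    k * P univ ≤ ∑ j, P (A j) :=
  calc k * P univ = ∫⁻ _, (k : ENNReal) ∂P := (lintegral_const _).symm
    _ ≤ ∫⁻ ω, ∑ j, (A j).indicator 1 ω ∂P := lintegral_mono fun ω => by
        simp only [Set.indicator_apply, Pi.one_apply, Finset.sum_boole]
        exact_mod_cast hk ω
    _ = ∑ j, P (A j) := by
        rw [lintegral_finsetSum _ fun j _ => measurable_one.indicator (hA j)]
        simp only [lintegral_indicator_one (hA _)]

theorem measure_comp_perm_mem {ι E : Type*} [MeasurableSpace E] {V : ι → Ω → E}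
    (hV : ∀ i, Measurable (V i)) {σ : Equiv.Perm ι}
    (hσ : P.map (fun ω i => V (σ i) ω) = P.map (fun ω i => V i ω))
    {S : Set (ι → E)} (hS : MeasurableSet S) :
    P {ω | (fun i => V (σ i) ω) ∈ S} = P {ω | (fun i => V i ω) ∈ S} := by
  change P ((fun ω i => V (σ i) ω) ⁻¹' S) = P ((fun ω i => V i ω) ⁻¹' S)
  rw [← Measure.map_apply (measurable_pi_lambda _ fun i => hV (σ i)) hS, hσ,
    Measure.map_apply (measurable_pi_lambda _ hV) hS]

theorem natCast_le_card_mul_measure_rank_lt {ι : Type*} [Fintype ι] [DecidableEq ι]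
    [IsProbabilityMeasure P] {V : ι → Ω → ℝ} (hV : ∀ i, Measurable (V i))
    (hexch : ∀ σ : Equiv.Perm ι, P.map (fun ω i => V (σ i) ω) = P.map (fun ω i => V i ω))
    (j : ι) {k : ℕ} (hk : k ≤ Fintype.card ι) :
    (k : ENNReal) ≤ Fintype.card ι * P {ω | rank (fun i => V i ω) j < k} := by
  have hmeas : ∀ j, MeasurableSet {y : ι → ℝ | rank y j < k} := fun j =>
    measurableSet_lt (measurable_rank j) measurable_const
  have hrank_eq : ∀ j', P {ω | rank (fun i => V i ω) j' < k} =
      P {ω | rank (fun i => V i ω) j < k} := by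
    intro j'
    refine (measure_comp_perm_mem hV (hexch (Equiv.swap j' j)) (hmeas j')).symm.trans ?_
    congr 1 with ω
    change rank ((fun i => V i ω) ∘ Equiv.swap j' j) j' < k ↔ rank (fun i => V i ω) j < k
    rw [rank_comp_perm, Equiv.swap_apply_left]
  calc (k : ENNReal) = k * P univ := by simp
    _ ≤ ∑ j', P {ω | rank (fun i => V i ω) j' < k} :=
        natCast_mul_le_sum_measure (A := fun j' => {ω | rank (fun i => V i ω) j' < k})
          (fun j' => measurable_pi_lambda _ hV (hmeas j'))
          fun ω => le_card_filter_rank_lt (fun i => V i ω) hk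
    _ = _ := by simp [hrank_eq]

end Probability

section Quantile

theorem le_quantileE_iff (β : ℝ) (F : Measure EReal) (w : EReal) :
    w ≤ quantileE β F ↔ ∀ z < w, F (Iic z) < ENNReal.ofReal β := by
  simp only [quantileE, le_sInf_iff, Set.mem_ofPred_eq]
  refine forall_congr' fun z => ?_
  rw [← not_imp_not, not_le, not_le]

theorem empE_Iic {m : ℕ} (v : Fin m → EReal) (z : EReal) :
    empE v (Iic z) = ENNReal.ofReal (#{i | v i ≤ z} / m) := by
  simp only [empE, wEmp, Measure.coe_finsetSum, Measure.coe_smul, Finset.sum_apply, Pi.smul_apply,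
    Measure.dirac_apply' _ measurableSet_Iic, Set.indicator_apply, Set.mem_Iic, smul_eq_mul,
    Pi.one_apply, mul_ite, mul_one, mul_zero]
  rw [Finset.sum_ite, sum_const_zero, add_zero, sum_const, nsmul_eq_mul,
    ← mul_one_div (#{i | v i ≤ z} : ℝ), ENNReal.ofReal_mul (Nat.cast_nonneg _),
    ENNReal.ofReal_natCast]

theorem forall_lt_card_filter_le_lt_iff {ι α : Type*} [Fintype ι] [LinearOrder α] [OrderBot α]
    (v : ι → α) {w : α} (hw : ⊥ < w) (c : ℝ) :
    (∀ z < w, (#{i | v i ≤ z} : ℝ) < c) ↔ (#{i | v i < w} : ℝ) < c := by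
  constructor
  · intro h
    refine lt_of_le_of_lt ?_ (h (({i | v i < w} : Finset ι).sup v)
      ((Finset.sup_lt_iff hw).2 fun i hi => (mem_filter.1 hi).2))
    exact_mod_cast Finset.card_le_card
      (monotone_filter_right _ fun i _ hi => le_sup (mem_filter.2 ⟨Finset.mem_univ i, hi⟩))
  · intro h z hz
    refine lt_of_le_of_lt ?_ h
    exact_mod_cast Finset.card_le_card
      (monotone_filter_right _ fun i _ (hi : v i ≤ z) => hi.trans_lt hz)

theorem le_quantileE_empE_iff {m : ℕ} (hm : 0 < m) (v : Fin m → EReal) {w : EReal} (hw : ⊥ < w)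
    {β : ℝ} (hβ : 0 < β) :
    w ≤ quantileE β (empE v) ↔ (#{i | v i < w} : ℝ) < β * m := by
  rw [le_quantileE_iff, ← forall_lt_card_filter_le_lt_iff v hw]
  refine forall₂_congr fun z _ => ?_
  rw [empE_Iic, ENNReal.ofReal_lt_ofReal_iff hβ, div_lt_iff₀ (by positivity)]

theorem coe_le_quantileE_snoc_top_iff {n : ℕ} (x : Fin n → ℝ) (w : ℝ) {β : ℝ} (hβ : 0 < β) :
    (w : EReal) ≤ quantileE β (empE (Fin.snoc (fun i => (x i : EReal)) ⊤)) ↔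
      (#{i | x i < w} : ℝ) < β * (n + 1) := by
  rw [le_quantileE_empE_iff n.succ_pos _ (EReal.bot_lt_coe w) hβ,
    Fin.card_filter_univ_eq_castSucc_of_not_last _ (by simp)]
  simp

end Quantile

theorem stmt0 {Ω : Type*} [MeasurableSpace Ω] (P : Measure Ω) [IsProbabilityMeasure P]
    (n : ℕ) (V : Fin (n + 1) → Ω → ℝ) (hmeas : ∀ i, Measurable (V i))
    (hexch : ∀ σ : Equiv.Perm (Fin (n + 1)),
      Measure.map (fun ω i => V (σ i) ω) P = Measure.map (fun ω i => V i ω) P)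
    (β : ℝ) (hβ : β ∈ Set.Ioo (0 : ℝ) 1) :
    ENNReal.ofReal β ≤
      P {ω | (V (Fin.last n) ω : EReal) ≤
        quantileE β (empE (Fin.snoc (fun i : Fin n => ((V i.castSucc ω : ℝ) : EReal)) ⊤))} := by
  obtain ⟨hβ0, hβ1⟩ := hβ
  set k := ⌈β * (n + 1)⌉₊ with hk
  have hkn : k ≤ Fintype.card (Fin (n + 1)) := by
    rw [Fintype.card_fin, Nat.ceil_le]
    push_cast
    nlinarith
  have hevent : {ω | (V (Fin.last n) ω : EReal) ≤
      quantileE β (empE (Fin.snoc (fun i : Fin n => ((V i.castSucc ω : ℝ) : EReal)) ⊤))} =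
      {ω | rank (fun i => V i ω) (Fin.last n) < k} := by
    ext ω
    rw [Set.mem_ofPred_eq, Set.mem_ofPred_eq, coe_le_quantileE_snoc_top_iff _ _ hβ0, rank,
      Fin.card_filter_univ_eq_castSucc_of_not_last (fun i => V i ω < V (Fin.last n) ω)
        (lt_irrefl _), hk, Nat.lt_ceil]
  have hbound := natCast_le_card_mul_measure_rank_lt hmeas hexch (Fin.last n) hkn
  rw [Fintype.card_fin] at hbound
  rw [hevent]
  refine (ENNReal.mul_le_mul_iff_left (c := (n + 1 : ENNReal)) (by simp) (by simp)).1 ?_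
  calc ENNReal.ofReal β * (n + 1) = ENNReal.ofReal (β * (n + 1)) := by
        rw [ENNReal.ofReal_mul hβ0.le]; norm_cast
    _ ≤ k := ENNReal.ofReal_le_of_le_toReal (by simpa using Nat.le_ceil _)
    _ ≤ _ := by rw [mul_comm]; exact_mod_cast hbound
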